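/- There exists a constant C, independent of n and x, such that for every n ≥ 1 and every x ∈ C²[0,1], ‖(I − Pₙ)K(I − Pₙ)x‖∞ ≤ C ‖x‖_{2,∞} h³, where Pₙ is the piecewise-constant midpoint interpolation. -/

import Mathlib

open Set MeasureTheory
set_option maxHeartbeats 1600000

/-- The Fredholm integral operator with a Green's-function-type kernel. -/
noncomputable def Kop (κ₁ κ₂ : ℝ → ℝ → ℝ) (x : ℝ → ℝ) (s : ℝ) : ℝ :=
  ∫ t in (0:ℝ)..1, (if t ≤ s then κ₁ s t else κ₂ s t) * x t

/-- The supremum norm on `[0,1]`. -/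
noncomputable def supNorm (x : ℝ → ℝ) : ℝ := ⨆ t : Set.Icc (0:ℝ) 1, |x t.1|

/-- The supremum norm on `[0,1)`; for the piecewise-continuous functions considered here it
coincides with the essential supremum norm on `[0,1]`. -/
noncomputable def supNormIco (x : ℝ → ℝ) : ℝ := ⨆ t : Set.Ico (0:ℝ) 1, |x t.1|

/-- The index `j ∈ {1,…,n}` such that `s` belongs to the subinterval `[t_{j−1}, t_j)` of the
uniform partition `t_j = j/n` (with `j = n` for `s = 1`). -/
noncomputable def interpIdx (n : ℕ) (s : ℝ) : ℕ := min n (⌊s * n⌋.toNat + 1)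

/-- The piecewise-constant interpolatory projection at the midpoints:
`(Pₙx)(s) = x((t_{j−1} + t_j)/2) = x((2j−1)/(2n))` for `s ∈ [t_{j−1}, t_j)`. -/
noncomputable def Pmid (n : ℕ) (x : ℝ → ℝ) (s : ℝ) : ℝ :=
  x ((2 * (interpIdx n s : ℝ) - 1) / (2 * n))

/-- The norm `‖x‖_{m,∞} = max_{0 ≤ i ≤ m} ‖x^{(i)}‖_∞` for `x ∈ C^m[0,1]`. -/
noncomputable def normC (m : ℕ) (x : ℝ → ℝ) : ℝ :=
  ⨆ i : Fin (m + 1), ⨆ t : Set.Icc (0:ℝ) 1, |iteratedDerivWithin i.1 x (Set.Icc 0 1) t.1|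

private lemma convex_T1 : Convex ℝ {p : ℝ × ℝ | 0 ≤ p.2 ∧ p.2 ≤ p.1 ∧ p.1 ≤ 1} := by
  intro p hp q hq a b ha hb hab
  obtain ⟨h1, h2, h3⟩ := hp; obtain ⟨k1, k2, k3⟩ := hq
  refine ⟨?_, ?_, ?_⟩ <;>
    simp only [Prod.smul_snd, Prod.smul_fst, Prod.fst_add, Prod.snd_add, smul_eq_mul] <;>
    nlinarith

private lemma convex_T2 : Convex ℝ {p : ℝ × ℝ | 0 ≤ p.1 ∧ p.1 ≤ p.2 ∧ p.2 ≤ 1} := by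
  intro p hp q hq a b ha hb hab
  obtain ⟨h1, h2, h3⟩ := hp; obtain ⟨k1, k2, k3⟩ := hq
  refine ⟨?_, ?_, ?_⟩ <;>
    simp only [Prod.smul_snd, Prod.smul_fst, Prod.fst_add, Prod.snd_add, smul_eq_mul] <;>
    nlinarith

private lemma compact_T1 : IsCompact {p : ℝ × ℝ | 0 ≤ p.2 ∧ p.2 ≤ p.1 ∧ p.1 ≤ 1} := by
  have hclosed : IsClosed {p : ℝ × ℝ | 0 ≤ p.2 ∧ p.2 ≤ p.1 ∧ p.1 ≤ 1} := by
    simp only [setOf_and]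
    exact (isClosed_le continuous_const continuous_snd).inter
      ((isClosed_le continuous_snd continuous_fst).inter
        (isClosed_le continuous_fst continuous_const))
  refine IsCompact.of_isClosed_subset (isCompact_Icc (a := ((0:ℝ),(0:ℝ))) (b := (1,1))) hclosed ?_
  rintro ⟨u, v⟩ ⟨h1, h2, h3⟩
  exact ⟨⟨by dsimp at *; linarith, h1⟩, ⟨h3, by dsimp at *; linarith⟩⟩

private lemma compact_T2 : IsCompact {p : ℝ × ℝ | 0 ≤ p.1 ∧ p.1 ≤ p.2 ∧ p.2 ≤ 1} := by
  have hclosed : IsClosed {p : ℝ × ℝ | 0 ≤ p.1 ∧ p.1 ≤ p.2 ∧ p.2 ≤ 1} := by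
    simp only [setOf_and]
    exact (isClosed_le continuous_const continuous_fst).inter
      ((isClosed_le continuous_fst continuous_snd).inter
        (isClosed_le continuous_snd continuous_const))
  refine IsCompact.of_isClosed_subset (isCompact_Icc (a := ((0:ℝ),(0:ℝ))) (b := (1,1))) hclosed ?_
  rintro ⟨u, v⟩ ⟨h1, h2, h3⟩
  exact ⟨⟨h1, by dsimp at *; linarith⟩, ⟨by dsimp at *; linarith, h3⟩⟩

private lemma ud_T1 : UniqueDiffOn ℝ {p : ℝ × ℝ | 0 ≤ p.2 ∧ p.2 ≤ p.1 ∧ p.1 ≤ 1} := by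
  apply uniqueDiffOn_convex convex_T1
  refine ⟨((3:ℝ)/4, (1:ℝ)/4), ?_⟩
  have hopen : IsOpen {p : ℝ × ℝ | 0 < p.2 ∧ p.2 < p.1 ∧ p.1 < 1} := by
    simp only [setOf_and]
    exact (isOpen_lt continuous_const continuous_snd).inter
      ((isOpen_lt continuous_snd continuous_fst).inter
        (isOpen_lt continuous_fst continuous_const))
  refine interior_maximal ?_ hopen ?_
  · rintro ⟨u, v⟩ ⟨h1, h2, h3⟩; exact ⟨le_of_lt h1, le_of_lt h2, le_of_lt h3⟩
  · refine ⟨by norm_num, by norm_num, by norm_num⟩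

private lemma ud_T2 : UniqueDiffOn ℝ {p : ℝ × ℝ | 0 ≤ p.1 ∧ p.1 ≤ p.2 ∧ p.2 ≤ 1} := by
  apply uniqueDiffOn_convex convex_T2
  refine ⟨((1:ℝ)/4, (3:ℝ)/4), ?_⟩
  have hopen : IsOpen {p : ℝ × ℝ | 0 < p.1 ∧ p.1 < p.2 ∧ p.2 < 1} := by
    simp only [setOf_and]
    exact (isOpen_lt continuous_const continuous_fst).inter
      ((isOpen_lt continuous_fst continuous_snd).inter
        (isOpen_lt continuous_snd continuous_const))
  refine interior_maximal ?_ hopen ?_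
  · rintro ⟨u, v⟩ ⟨h1, h2, h3⟩; exact ⟨le_of_lt h1, le_of_lt h2, le_of_lt h3⟩
  · refine ⟨by norm_num, by norm_num, by norm_num⟩

private lemma exists_lip_taylor {f : ℝ × ℝ → ℝ} {S : Set (ℝ × ℝ)}
    (hconv : Convex ℝ S) (hcomp : IsCompact S) (hud : UniqueDiffOn ℝ S)
    (hf : ContDiffOn ℝ 2 f S) :
    ∃ L : ℝ, 0 ≤ L ∧
      (∀ p ∈ S, ∀ q ∈ S, |f q - f p| ≤ L * ‖q - p‖) ∧
      (∀ p ∈ S, ∀ q ∈ S,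
        ‖fderivWithin ℝ f S q - fderivWithin ℝ f S p‖ ≤ L * ‖q - p‖) ∧
      (∀ p ∈ S, ∀ q ∈ S,
        |f q - f p - fderivWithin ℝ f S p (q - p)| ≤ L * ‖q - p‖ ^ 2) := by
  have hdiff : DifferentiableOn ℝ f S := hf.differentiableOn (by norm_num)
  set G := fderivWithin ℝ f S with hG
  have hG1 : ContDiffOn ℝ 1 G S := hf.fderivWithin hud (by norm_num)
  obtain ⟨M1, hM1⟩ := hcomp.exists_bound_of_continuousOn hG1.continuousOn
  have hGdiff : DifferentiableOn ℝ G S := hG1.differentiableOn (by norm_num)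
  obtain ⟨M2, hM2⟩ := hcomp.exists_bound_of_continuousOn
    (hG1.continuousOn_fderivWithin hud le_rfl)
  refine ⟨max (max M1 M2) 0, le_max_right _ _, ?_, ?_, ?_⟩
  · intro p hp q hq
    have := hconv.norm_image_sub_le_of_norm_fderivWithin_le (C := max (max M1 M2) 0) hdiff
      (fun z hz => le_trans (hM1 z hz) (le_trans (le_max_left _ _) (le_max_left _ _)))
      hp hq
    simpa [Real.norm_eq_abs] using this
  · intro p hp q hq
    exact hconv.norm_image_sub_le_of_norm_fderivWithin_le (C := max (max M1 M2) 0) hGdiff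
      (fun z hz => le_trans (hM2 z hz) (le_trans (le_max_right _ _) (le_max_left _ _)))
      hp hq
  · intro p hp q hq
    set L : ℝ := max (max M1 M2) 0 with hL
    have hGlip : ∀ z ∈ S, ‖G z - G p‖ ≤ L * ‖z - p‖ := by
      intro z hz
      exact hconv.norm_image_sub_le_of_norm_fderivWithin_le (C := L) hGdiff
        (fun w hw => le_trans (hM2 w hw) (le_trans (le_max_right _ _) (le_max_left _ _)))
        hp hz
    have hL0 : (0:ℝ) ≤ L := le_max_right _ _
    set s' : Set (ℝ × ℝ) := S ∩ Metric.closedBall p ‖q - p‖ with hs'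
    have hconv' : Convex ℝ s' := hconv.inter (convex_closedBall _ _)
    have hder : ∀ z ∈ s', HasFDerivWithinAt f (G z) s' z := fun z hz =>
      ((hdiff z hz.1).hasFDerivWithinAt).mono inter_subset_left
    have hbound : ∀ z ∈ s', ‖G z - G p‖ ≤ L * ‖q - p‖ := by
      intro z hz
      refine le_trans (hGlip z hz.1) (mul_le_mul_of_nonneg_left ?_ hL0)
      have := hz.2
      rwa [Metric.mem_closedBall, dist_eq_norm] at this
    have hps : p ∈ s' := ⟨hp, Metric.mem_closedBall_self (norm_nonneg _)⟩
    have hqs : q ∈ s' := ⟨hq, by rw [Metric.mem_closedBall, dist_eq_norm]⟩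
    have := Convex.norm_image_sub_le_of_norm_hasFDerivWithin_le' hder hbound hconv' hps hqs
    calc |f q - f p - G p (q - p)| ≤ L * ‖q - p‖ * ‖q - p‖ := by
          simpa [Real.norm_eq_abs] using this
      _ = L * ‖q - p‖ ^ 2 := by ring

private lemma exists_cell_Ico {n : ℕ} (hn : 1 ≤ n) {t : ℝ} (ht : t ∈ Ico (0:ℝ) 1) :
    ∃ j : ℕ, j < n ∧ interpIdx n t = j + 1 ∧ (j:ℝ)/n ≤ t ∧ t < ((j:ℝ)+1)/n := by
  have npos : (0:ℝ) < n := by exact_mod_cast hn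
  obtain ⟨ht0, ht1⟩ := ht
  have h0 : (0:ℝ) ≤ t * n := by positivity
  have hfl0 : (0:ℤ) ≤ ⌊t * n⌋ := Int.floor_nonneg.2 h0
  have hfln : ⌊t * n⌋ < (n:ℤ) := by
    apply Int.floor_lt.2
    push_cast
    nlinarith
  set j := ⌊t * n⌋.toNat with hj
  have hcastZ : ((j:ℤ)) = ⌊t * n⌋ := Int.toNat_of_nonneg hfl0
  have hcast : ((j:ℝ)) = ((⌊t * n⌋ : ℤ) : ℝ) := by exact_mod_cast hcastZ
  have hjn : j < n := by omega
  have hle : (j:ℝ)/n ≤ t := by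
    rw [div_le_iff₀ npos, hcast]; exact Int.floor_le _
  have hlt : t < ((j:ℝ)+1)/n := by
    rw [lt_div_iff₀ npos, hcast]
    push_cast
    exact Int.lt_floor_add_one _
  refine ⟨j, hjn, ?_, hle, hlt⟩
  unfold interpIdx
  omega

private lemma interpIdx_one {n : ℕ} (hn : 1 ≤ n) : interpIdx n 1 = n := by
  unfold interpIdx
  have : (1:ℝ) * n = ((n:ℕ):ℝ) := by push_cast; ring
  rw [this, Int.floor_natCast]
  omega

private lemma exists_cell_Icc {n : ℕ} (hn : 1 ≤ n) {t : ℝ} (ht : t ∈ Icc (0:ℝ) 1) :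
    ∃ j : ℕ, j < n ∧ interpIdx n t = j + 1 ∧ (j:ℝ)/n ≤ t ∧ t ≤ ((j:ℝ)+1)/n := by
  have npos : (0:ℝ) < n := by exact_mod_cast hn
  rcases lt_or_eq_of_le ht.2 with h1 | h1
  · obtain ⟨j, hjn, hI, hle, hlt⟩ := exists_cell_Ico hn ⟨ht.1, h1⟩
    exact ⟨j, hjn, hI, hle, le_of_lt hlt⟩
  · refine ⟨n - 1, by omega, ?_, ?_, ?_⟩
    · rw [h1, interpIdx_one hn]; omega
    · rw [h1]
      have : ((n - 1 : ℕ) : ℝ) = (n:ℝ) - 1 := by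
        rw [Nat.cast_sub hn]; norm_num
      rw [this, div_le_iff₀ npos]; nlinarith
    · rw [h1]
      have : ((n - 1 : ℕ) : ℝ) + 1 = (n:ℝ) := by
        rw [Nat.cast_sub hn]; norm_num
      rw [this, le_div_iff₀ npos]; nlinarith

private lemma Pmid_eq {n j : ℕ} {t : ℝ} (x : ℝ → ℝ) (hI : interpIdx n t = j + 1) :
    Pmid n x t = x ((2*(j:ℝ)+1)/(2*n)) := by
  unfold Pmid
  rw [hI]
  congr 1
  push_cast
  ring

private lemma mid_mem {n j : ℕ} (hn : 1 ≤ n) (hjn : j < n) :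
    (2*(j:ℝ)+1)/(2*n) ∈ Icc (0:ℝ) 1 := by
  have npos : (0:ℝ) < n := by exact_mod_cast hn
  have hjr : (j:ℝ) + 1 ≤ n := by exact_mod_cast hjn
  constructor
  · positivity
  · rw [div_le_one (by positivity)]; nlinarith

private lemma mid_lb {n j : ℕ} (hn : 1 ≤ n) : ((j:ℝ))/n ≤ (2*(j:ℝ)+1)/(2*n) := by
  have npos : (0:ℝ) < n := by exact_mod_cast hn
  rw [div_le_div_iff₀ npos (by positivity)]; nlinarith

private lemma mid_ub {n j : ℕ} (hn : 1 ≤ n) : (2*(j:ℝ)+1)/(2*n) < ((j:ℝ)+1)/n := by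
  have npos : (0:ℝ) < n := by exact_mod_cast hn
  rw [div_lt_div_iff₀ (by positivity) npos]; nlinarith

private lemma mid_dist {n j : ℕ} (hn : 1 ≤ n) {t : ℝ}
    (h1 : (j:ℝ)/n ≤ t) (h2 : t ≤ ((j:ℝ)+1)/n) :
    |t - (2*(j:ℝ)+1)/(2*n)| ≤ 1/(2*n) := by
  have npos : (0:ℝ) < n := by exact_mod_cast hn
  have e1 : ((j:ℝ))/n = (2*(j:ℝ)+1)/(2*n) - 1/(2*n) := by field_simp; ring
  have e2 : ((j:ℝ)+1)/n = (2*(j:ℝ)+1)/(2*n) + 1/(2*n) := by field_simp; ring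
  rw [abs_le]
  constructor <;> [linarith [e1 ▸ h1]; linarith [e2 ▸ h2]]

private lemma norm_pair_fst (a : ℝ) : ‖((a, (0:ℝ)) : ℝ × ℝ)‖ = |a| := by
  simp [Prod.norm_def, Real.norm_eq_abs]

private lemma Dbound {κ₁ κ₂ : ℝ → ℝ → ℝ} {L : ℝ} (hL : 0 ≤ L)
    (lip1 : ∀ p ∈ {p : ℝ × ℝ | 0 ≤ p.2 ∧ p.2 ≤ p.1 ∧ p.1 ≤ 1},
      ∀ q ∈ {p : ℝ × ℝ | 0 ≤ p.2 ∧ p.2 ≤ p.1 ∧ p.1 ≤ 1},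
        |Function.uncurry κ₁ q - Function.uncurry κ₁ p| ≤ L * ‖q - p‖)
    (lip2 : ∀ p ∈ {p : ℝ × ℝ | 0 ≤ p.1 ∧ p.1 ≤ p.2 ∧ p.2 ≤ 1},
      ∀ q ∈ {p : ℝ × ℝ | 0 ≤ p.1 ∧ p.1 ≤ p.2 ∧ p.2 ≤ 1},
        |Function.uncurry κ₂ q - Function.uncurry κ₂ p| ≤ L * ‖q - p‖)
    (hdiag : ∀ s ∈ Icc (0:ℝ) 1, κ₁ s s = κ₂ s s)
    {s m t : ℝ} (hs : s ∈ Icc (0:ℝ) 1) (hm : m ∈ Icc (0:ℝ) 1) (ht : t ∈ Icc (0:ℝ) 1) :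
    |(if t ≤ s then κ₁ s t else κ₂ s t) - (if t ≤ m then κ₁ m t else κ₂ m t)|
      ≤ L * |s - m| := by
  obtain ⟨hs0, hs1⟩ := hs; obtain ⟨hm0, hm1⟩ := hm; obtain ⟨ht0, ht1⟩ := ht
  by_cases h1 : t ≤ s <;> by_cases h2 : t ≤ m <;> simp only [h1, h2, if_true, if_false]
  · -- both κ₁
    have := lip1 (m, t) ⟨ht0, h2, hm1⟩ (s, t) ⟨ht0, h1, hs1⟩
    simp only [Function.uncurry] at this
    have he : ((s,t) : ℝ × ℝ) - (m,t) = (s - m, 0) := by simp [Prod.ext_iff]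
    rwa [he, norm_pair_fst] at this
  · -- m < t ≤ s
    push_neg at h2
    have key : κ₁ s t - κ₂ m t = (κ₁ s t - κ₁ t t) + (κ₂ t t - κ₂ m t) := by
      rw [hdiag t ⟨ht0, ht1⟩]; ring
    rw [key]
    have b1 := lip1 (t, t) ⟨ht0, le_refl t, ht1⟩ (s, t) ⟨ht0, h1, hs1⟩
    have b2 := lip2 (m, t) ⟨hm0, le_of_lt h2, ht1⟩ (t, t) ⟨ht0, le_refl t, ht1⟩
    simp only [Function.uncurry] at b1 b2
    have he1 : ((s,t) : ℝ × ℝ) - (t,t) = (s - t, 0) := by simp [Prod.ext_iff]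
    have he2 : ((t,t) : ℝ × ℝ) - (m,t) = (t - m, 0) := by simp [Prod.ext_iff]
    rw [he1, norm_pair_fst] at b1
    rw [he2, norm_pair_fst] at b2
    have habs : |s - t| + |t - m| = |s - m| := by
      rw [abs_of_nonneg (by linarith), abs_of_nonneg (by linarith),
        abs_of_nonneg (by linarith)]
      ring
    calc |κ₁ s t - κ₁ t t + (κ₂ t t - κ₂ m t)|
        ≤ |κ₁ s t - κ₁ t t| + |κ₂ t t - κ₂ m t| := abs_add_le _ _
      _ ≤ L * |s - t| + L * |t - m| := add_le_add b1 b2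
      _ = L * |s - m| := by rw [← habs]; ring
  · -- s < t ≤ m
    push_neg at h1
    have key : κ₂ s t - κ₁ m t = (κ₂ s t - κ₂ t t) + (κ₁ t t - κ₁ m t) := by
      rw [hdiag t ⟨ht0, ht1⟩]; ring
    rw [key]
    have b1 := lip2 (t, t) ⟨ht0, le_refl t, ht1⟩ (s, t) ⟨hs0, le_of_lt h1, ht1⟩
    have b2 := lip1 (m, t) ⟨ht0, h2, hm1⟩ (t, t) ⟨ht0, le_refl t, ht1⟩
    simp only [Function.uncurry] at b1 b2
    have he1 : ((s,t) : ℝ × ℝ) - (t,t) = (s - t, 0) := by simp [Prod.ext_iff]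
    have he2 : ((t,t) : ℝ × ℝ) - (m,t) = (t - m, 0) := by simp [Prod.ext_iff]
    rw [he1, norm_pair_fst] at b1
    rw [he2, norm_pair_fst] at b2
    have habs : |s - t| + |t - m| = |s - m| := by
      rw [abs_of_nonpos (by linarith), abs_of_nonpos (by linarith),
        abs_of_nonpos (by linarith)]
      ring
    calc |κ₂ s t - κ₂ t t + (κ₁ t t - κ₁ m t)|
        ≤ |κ₂ s t - κ₂ t t| + |κ₁ t t - κ₁ m t| := abs_add_le _ _
      _ ≤ L * |s - t| + L * |t - m| := add_le_add b1 b2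
      _ = L * |s - m| := by rw [← habs]; ring
  · -- both κ₂
    push_neg at h1 h2
    have := lip2 (m, t) ⟨hm0, le_of_lt h2, ht1⟩ (s, t) ⟨hs0, le_of_lt h1, ht1⟩
    simp only [Function.uncurry] at this
    have he : ((s,t) : ℝ × ℝ) - (m,t) = (s - m, 0) := by simp [Prod.ext_iff]
    rwa [he, norm_pair_fst] at this

private lemma int_piece {κ₁ κ₂ : ℝ → ℝ → ℝ} {x : ℝ → ℝ}
    (hc1 : ContinuousOn (Function.uncurry κ₁) {p : ℝ × ℝ | 0 ≤ p.2 ∧ p.2 ≤ p.1 ∧ p.1 ≤ 1})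
    (hc2 : ContinuousOn (Function.uncurry κ₂) {p : ℝ × ℝ | 0 ≤ p.1 ∧ p.1 ≤ p.2 ∧ p.2 ≤ 1})
    (hxc : ContinuousOn x (Icc (0:ℝ) 1))
    {σ : ℝ} (hσ : σ ∈ Icc (0:ℝ) 1) (c : ℝ) {u v : ℝ}
    (hu : 0 ≤ u) (huv : u ≤ v) (hv : v ≤ 1) :
    IntervalIntegrable
      (fun t => (if t ≤ σ then κ₁ σ t else κ₂ σ t) * (x t - c)) volume u v := by
  obtain ⟨hσ0, hσ1⟩ := hσ
  set w : ℝ := max u (min v σ) with hw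
  have hw1 : u ≤ w := le_max_left _ _
  have hw2 : w ≤ v := max_le huv (min_le_left _ _)
  apply IntervalIntegrable.trans (b := w)
  · -- on [u, w] the function is the κ₁ branch
    by_cases hσu : σ < u
    · have hwu : w = u := by
        rw [hw, max_eq_left]
        exact le_of_lt (lt_of_le_of_lt (min_le_right _ _) hσu)
      rw [hwu]
    · push_neg at hσu
      have hwσ : w ≤ σ := max_le hσu (min_le_right _ _)
      have hcont : ContinuousOn (fun t => κ₁ σ t * (x t - c)) (Icc u w) := by
        have hcomp : ContinuousOn (fun t : ℝ => Function.uncurry κ₁ (σ, t)) (Icc u w) := by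
          apply hc1.comp (Continuous.continuousOn (by continuity))
          intro t ht
          exact ⟨le_trans hu ht.1, le_trans ht.2 hwσ, hσ1⟩
        exact hcomp.mul ((hxc.mono (fun t ht => ⟨le_trans hu ht.1,
          le_trans ht.2 (le_trans hw2 hv)⟩)).sub continuousOn_const)
      apply ContinuousOn.intervalIntegrable
      rw [uIcc_of_le hw1]
      apply hcont.congr
      intro t ht
      have : t ≤ σ := le_trans ht.2 hwσ
      simp [this]
  · -- on [w, v] the function is the κ₂ branch a.e.
    by_cases hσv : v < σ
    · have hwv : w = v := by
        rw [hw, min_eq_left (le_of_lt hσv), max_eq_right huv]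
      rw [hwv]
    · push_neg at hσv
      have hσw : σ ≤ w := le_trans (le_min hσv (le_refl σ)) (le_max_right _ _)
      have hcont : ContinuousOn (fun t => κ₂ σ t * (x t - c)) (Icc w v) := by
        have hcomp : ContinuousOn (fun t : ℝ => Function.uncurry κ₂ (σ, t)) (Icc w v) := by
          apply hc2.comp (Continuous.continuousOn (by continuity))
          intro t ht
          exact ⟨hσ0, le_trans hσw ht.1, le_trans ht.2 hv⟩
        exact hcomp.mul ((hxc.mono (fun t ht => ⟨le_trans hu (le_trans hw1 ht.1),
          le_trans ht.2 hv⟩)).sub continuousOn_const)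
      have hint : IntervalIntegrable (fun t => κ₂ σ t * (x t - c)) volume w v := by
        apply ContinuousOn.intervalIntegrable
        rwa [uIcc_of_le hw2]
      rw [intervalIntegrable_iff_integrableOn_Ioc_of_le hw2] at hint ⊢
      apply hint.congr
      filter_upwards [ae_restrict_mem measurableSet_Ioc] with t ht
      have : ¬ t ≤ σ := not_le.2 (lt_of_le_of_lt hσw ht.1)
      simp [this]

private lemma interpIdx_eq {n j : ℕ} (hn : 1 ≤ n) (hjn : j < n) {t : ℝ}
    (h1 : (j:ℝ)/n ≤ t) (h2 : t < ((j:ℝ)+1)/n) : interpIdx n t = j + 1 := by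
  have npos : (0:ℝ) < n := by exact_mod_cast hn
  have hj1 : ((j:ℝ)+1)/n ≤ 1 := by
    rw [div_le_one npos]; exact_mod_cast hjn
  have ht : t ∈ Ico (0:ℝ) 1 := ⟨le_trans (by positivity) h1, lt_of_lt_of_le h2 hj1⟩
  obtain ⟨j', hj'n, hI, h1', h2'⟩ := exists_cell_Ico hn ht
  have e1 : (j:ℝ) < (j':ℝ) + 1 := by
    have := lt_of_le_of_lt h1 h2'
    rw [div_lt_div_iff₀ npos npos] at this
    nlinarith
  have e2 : (j':ℝ) < (j:ℝ) + 1 := by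
    have := lt_of_le_of_lt h1' h2
    rw [div_lt_div_iff₀ npos npos] at this
    nlinarith
  have e1' : j < j' + 1 := by exact_mod_cast e1
  have e2' : j' < j + 1 := by exact_mod_cast e2
  have : j = j' := by omega
  rw [this, hI]

private lemma Pmid_eq' {n j : ℕ} {t : ℝ} (x : ℝ → ℝ) (hI : interpIdx n t = j + 1) :
    Pmid n x t = x ((2*(j:ℝ)+1)/(2*n)) := by
  unfold Pmid; rw [hI]; congr 1; push_cast; ring

private lemma cell_intable {κ₁ κ₂ : ℝ → ℝ → ℝ} {x : ℝ → ℝ}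
    (hc1 : ContinuousOn (Function.uncurry κ₁) {p : ℝ × ℝ | 0 ≤ p.2 ∧ p.2 ≤ p.1 ∧ p.1 ≤ 1})
    (hc2 : ContinuousOn (Function.uncurry κ₂) {p : ℝ × ℝ | 0 ≤ p.1 ∧ p.1 ≤ p.2 ∧ p.2 ≤ 1})
    (hxc : ContinuousOn x (Icc (0:ℝ) 1))
    (hpiece : ∀ (σ : ℝ), σ ∈ Icc (0:ℝ) 1 → ∀ (c u v : ℝ),
      0 ≤ u → u ≤ v → v ≤ 1 →
      IntervalIntegrable (fun t => (if t ≤ σ then κ₁ σ t else κ₂ σ t) * (x t - c)) volume u v)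
    {n j : ℕ} (hn : 1 ≤ n) (hjn : j < n) {σ : ℝ} (hσ : σ ∈ Icc (0:ℝ) 1) :
    IntervalIntegrable
      (fun t => (if t ≤ σ then κ₁ σ t else κ₂ σ t) * (x t - Pmid n x t))
      volume ((j:ℝ)/n) (((j:ℝ)+1)/n) := by
  have npos : (0:ℝ) < n := by exact_mod_cast hn
  have hu : (0:ℝ) ≤ (j:ℝ)/n := by positivity
  have huv : (j:ℝ)/n ≤ ((j:ℝ)+1)/n := by gcongr; linarith
  have hv : ((j:ℝ)+1)/n ≤ 1 := by rw [div_le_one npos]; exact_mod_cast hjn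
  have hg := hpiece σ hσ (x ((2*(j:ℝ)+1)/(2*n))) ((j:ℝ)/n) (((j:ℝ)+1)/n) hu huv hv
  rw [intervalIntegrable_iff_integrableOn_Ioc_of_le huv] at hg ⊢
  apply hg.congr
  have h0 : (volume : Measure ℝ) {((j:ℝ)+1)/n} = 0 := Real.volume_singleton
  have hvne : ∀ᵐ (t:ℝ) ∂(volume : Measure ℝ), t ≠ ((j:ℝ)+1)/n := by
    refine (measure_eq_zero_iff_ae_notMem.mp h0).mono ?_
    intro a ha
    simpa using ha
  filter_upwards [ae_restrict_mem measurableSet_Ioc, ae_restrict_of_ae hvne] with t ht htne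
  have hIt : interpIdx n t = j + 1 :=
    interpIdx_eq hn hjn (le_of_lt ht.1) (lt_of_le_of_ne ht.2 htne)
  rw [Pmid_eq' x hIt]

private lemma norm_pair_fst' (a : ℝ) : ‖((a, (0:ℝ)) : ℝ × ℝ)‖ = |a| := by
  simp [Prod.norm_def, Real.norm_eq_abs]

private lemma norm_pair_snd' (a : ℝ) : ‖(((0:ℝ), a) : ℝ × ℝ)‖ = |a| := by
  simp [Prod.norm_def, Real.norm_eq_abs]

private lemma good_cell {κ : ℝ → ℝ → ℝ} {S : Set (ℝ × ℝ)} {L : ℝ} (hL : 0 ≤ L)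
    (lip : ∀ p ∈ S, ∀ q ∈ S, |Function.uncurry κ q - Function.uncurry κ p| ≤ L * ‖q - p‖)
    (lipG : ∀ p ∈ S, ∀ q ∈ S,
      ‖fderivWithin ℝ (Function.uncurry κ) S q - fderivWithin ℝ (Function.uncurry κ) S p‖
        ≤ L * ‖q - p‖)
    (tay : ∀ p ∈ S, ∀ q ∈ S,
      |Function.uncurry κ q - Function.uncurry κ p
        - fderivWithin ℝ (Function.uncurry κ) S p (q - p)| ≤ L * ‖q - p‖ ^ 2)
    (hScont : ContinuousOn (Function.uncurry κ) S)
    {x dx : ℝ → ℝ} {X : ℝ} (hX : 0 ≤ X)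
    {s m u v μ δ : ℝ} (hδ : 0 ≤ δ)
    (hsm : |s - m| ≤ δ) (huv : u ≤ v) (hμm : μ ∈ Icc u v)
    (hμd : ∀ t ∈ Icc u v, |t - μ| ≤ δ)
    (hmemS : ∀ t ∈ Icc u v, (s, t) ∈ S ∧ (m, t) ∈ S)
    (hxlip : ∀ t ∈ Icc u v, |x t - x μ| ≤ X * δ)
    (hxtay : ∀ t ∈ Icc u v, |x t - x μ - dx μ * (t - μ)| ≤ X * δ ^ 2)
    (hzero : (∫ t in u..v, (t - μ)) = 0)
    (hxc : ContinuousOn x (Icc u v)) :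
    |∫ t in u..v, (κ s t - κ m t) * (x t - x μ)|
      ≤ 3 * L * δ ^ 2 * (X * δ) * (v - u) + L * δ * (X * δ ^ 2 * (v - u)) := by
  set G := fderivWithin ℝ (Function.uncurry κ) S with hG
  -- continuity of slices
  have hcs : ContinuousOn (fun t => κ s t) (Icc u v) := by
    have : ContinuousOn (fun t : ℝ => Function.uncurry κ (s, t)) (Icc u v) :=
      hScont.comp (Continuous.continuousOn (continuous_const.prodMk continuous_id)) (fun t ht => (hmemS t ht).1)
    exact this
  have hcm : ContinuousOn (fun t => κ m t) (Icc u v) := by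
    have : ContinuousOn (fun t : ℝ => Function.uncurry κ (m, t)) (Icc u v) :=
      hScont.comp (Continuous.continuousOn (continuous_const.prodMk continuous_id)) (fun t ht => (hmemS t ht).2)
    exact this
  set Dμ : ℝ := κ s μ - κ m μ with hDμ
  -- pointwise bound for the first part
  have hptw : ∀ t ∈ Icc u v, |κ s t - κ m t - Dμ| ≤ 3 * L * δ ^ 2 := by
    intro t ht
    have hmem_st := (hmemS t ht).1
    have hmem_mt := (hmemS t ht).2
    have hmem_sμ := (hmemS μ hμm).1
    have hmem_mμ := (hmemS μ hμm).2
    have hv1 : ((s, t) : ℝ × ℝ) - (s, μ) = (0, t - μ) := by simp [Prod.ext_iff]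
    have hv2 : ((m, t) : ℝ × ℝ) - (m, μ) = (0, t - μ) := by simp [Prod.ext_iff]
    have hv3 : ((s, μ) : ℝ × ℝ) - (m, μ) = (s - m, 0) := by simp [Prod.ext_iff]
    have hA := tay (s, μ) hmem_sμ (s, t) hmem_st
    have hB := tay (m, μ) hmem_mμ (m, t) hmem_mt
    rw [hv1] at hA
    rw [hv2] at hB
    simp only [Function.uncurry] at hA hB
    rw [norm_pair_snd'] at hA hB
    have hC : ‖G (s, μ) - G (m, μ)‖ ≤ L * δ := by
      have := lipG (m, μ) hmem_mμ (s, μ) hmem_sμ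
      rw [hv3, norm_pair_fst'] at this
      exact le_trans this (mul_le_mul_of_nonneg_left hsm hL)
    have hCapp : |(G (s, μ)) ((0:ℝ), t - μ) - (G (m, μ)) ((0:ℝ), t - μ)| ≤ L * δ * δ := by
      have h1 : (G (s, μ)) ((0:ℝ), t - μ) - (G (m, μ)) ((0:ℝ), t - μ)
          = (G (s, μ) - G (m, μ)) ((0:ℝ), t - μ) := by
        simp [ContinuousLinearMap.sub_apply]
      rw [h1, ← Real.norm_eq_abs]
      calc ‖(G (s, μ) - G (m, μ)) ((0:ℝ), t - μ)‖
          ≤ ‖G (s, μ) - G (m, μ)‖ * ‖(((0:ℝ), t - μ) : ℝ × ℝ)‖ :=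
            ContinuousLinearMap.le_opNorm _ _
        _ ≤ (L * δ) * δ := by
            rw [norm_pair_snd']
            exact mul_le_mul hC (hμd t ht) (abs_nonneg _) (by positivity)
    set A : ℝ := κ s t - κ s μ - (G (s, μ)) ((0:ℝ), t - μ) with hAdef
    set B : ℝ := κ m t - κ m μ - (G (m, μ)) ((0:ℝ), t - μ) with hBdef
    set Cc : ℝ := (G (s, μ)) ((0:ℝ), t - μ) - (G (m, μ)) ((0:ℝ), t - μ) with hCdef
    have hkey : κ s t - κ m t - Dμ = A - B + Cc := by
      rw [hAdef, hBdef, hCdef, hDμ]; ring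
    have htμ2 : |t - μ| ^ 2 ≤ δ ^ 2 := by
      have := hμd t ht
      nlinarith [abs_nonneg (t - μ)]
    have tri1 : |A - B + Cc| ≤ |A - B| + |Cc| := abs_add_le _ _
    have tri2 : |A - B| ≤ |A| + |B| := abs_sub _ _
    have hA2 : |A| ≤ L * δ ^ 2 := le_trans hA (mul_le_mul_of_nonneg_left htμ2 hL)
    have hB2 : |B| ≤ L * δ ^ 2 := le_trans hB (mul_le_mul_of_nonneg_left htμ2 hL)
    rw [hkey]
    calc |A - B + Cc| ≤ |A| + |B| + |Cc| := by linarith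
      _ ≤ L * δ ^ 2 + L * δ ^ 2 + L * δ * δ := add_le_add (add_le_add hA2 hB2) hCapp
      _ = 3 * L * δ ^ 2 := by ring
  -- split the integral
  have hint1 : IntervalIntegrable (fun t => (κ s t - κ m t - Dμ) * (x t - x μ)) volume u v := by
    apply ContinuousOn.intervalIntegrable
    rw [uIcc_of_le huv]
    exact ((hcs.sub hcm).sub continuousOn_const).mul (hxc.sub continuousOn_const)
  have hint2 : IntervalIntegrable (fun t => Dμ * (x t - x μ)) volume u v := by
    apply ContinuousOn.intervalIntegrable
    rw [uIcc_of_le huv]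
    exact continuousOn_const.mul (hxc.sub continuousOn_const)
  have hsplit : (∫ t in u..v, (κ s t - κ m t) * (x t - x μ))
      = (∫ t in u..v, (κ s t - κ m t - Dμ) * (x t - x μ))
        + (∫ t in u..v, Dμ * (x t - x μ)) := by
    rw [← intervalIntegral.integral_add hint1 hint2]
    apply intervalIntegral.integral_congr
    intro t _
    ring
  -- second piece: remove the linear part
  have hint3 : IntervalIntegrable (fun t => x t - x μ - dx μ * (t - μ)) volume u v := by
    apply ContinuousOn.intervalIntegrable
    rw [uIcc_of_le huv]
    exact (hxc.sub continuousOn_const).sub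
      (continuousOn_const.mul ((continuousOn_id.sub continuousOn_const)))
  have hint4 : IntervalIntegrable (fun t => dx μ * (t - μ)) volume u v := by
    apply ContinuousOn.intervalIntegrable
    rw [uIcc_of_le huv]
    exact continuousOn_const.mul ((continuousOn_id.sub continuousOn_const))
  have hsecond : (∫ t in u..v, (x t - x μ))
      = ∫ t in u..v, (x t - x μ - dx μ * (t - μ)) := by
    have e1 : (∫ t in u..v, (x t - x μ))
        = (∫ t in u..v, (x t - x μ - dx μ * (t - μ)))
          + (∫ t in u..v, dx μ * (t - μ)) := by
      rw [← intervalIntegral.integral_add hint3 hint4]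
      apply intervalIntegral.integral_congr
      intro t _
      ring
    have e2 : (∫ t in u..v, dx μ * (t - μ)) = dx μ * ∫ t in u..v, (t - μ) :=
      intervalIntegral.integral_const_mul _ _
    rw [e1, e2, hzero, mul_zero, add_zero]
  -- bounds
  have hvu : |v - u| = v - u := abs_of_nonneg (by linarith)
  have hb1 : |∫ t in u..v, (κ s t - κ m t - Dμ) * (x t - x μ)|
      ≤ 3 * L * δ ^ 2 * (X * δ) * (v - u) := by
    rw [← Real.norm_eq_abs, ← hvu]
    apply intervalIntegral.norm_integral_le_of_norm_le_const
    intro t ht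
    rw [uIoc_of_le huv] at ht
    have ht' : t ∈ Icc u v := ⟨le_of_lt ht.1, ht.2⟩
    rw [Real.norm_eq_abs, abs_mul]
    exact mul_le_mul (hptw t ht') (hxlip t ht') (abs_nonneg _) (by positivity)
  have hDμb : |Dμ| ≤ L * δ := by
    have := lip (m, μ) (hmemS μ hμm).2 (s, μ) (hmemS μ hμm).1
    simp only [Function.uncurry] at this
    have hv3 : ((s, μ) : ℝ × ℝ) - (m, μ) = (s - m, 0) := by simp [Prod.ext_iff]
    rw [hv3, norm_pair_fst'] at this
    exact le_trans this (mul_le_mul_of_nonneg_left hsm hL)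
  have hb3 : |∫ t in u..v, (x t - x μ - dx μ * (t - μ))| ≤ X * δ ^ 2 * (v - u) := by
    rw [← Real.norm_eq_abs, ← hvu]
    apply intervalIntegral.norm_integral_le_of_norm_le_const
    intro t ht
    rw [uIoc_of_le huv] at ht
    have ht' : t ∈ Icc u v := ⟨le_of_lt ht.1, ht.2⟩
    rw [Real.norm_eq_abs]
    exact hxtay t ht'
  have hb2 : |∫ t in u..v, Dμ * (x t - x μ)| ≤ L * δ * (X * δ ^ 2 * (v - u)) := by
    rw [intervalIntegral.integral_const_mul, abs_mul, hsecond]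
    exact mul_le_mul hDμb hb3 (abs_nonneg _) (by positivity)
  calc |∫ t in u..v, (κ s t - κ m t) * (x t - x μ)|
      ≤ |∫ t in u..v, (κ s t - κ m t - Dμ) * (x t - x μ)|
        + |∫ t in u..v, Dμ * (x t - x μ)| := by rw [hsplit]; exact abs_add_le _ _
    _ ≤ 3 * L * δ ^ 2 * (X * δ) * (v - u) + L * δ * (X * δ ^ 2 * (v - u)) :=
        add_le_add hb1 hb2

/-- there is a constant `C`, independent of `n` and `x`, such that for every
`n ≥ 1` and every `x ∈ C²[0,1]`, `‖(I − Pₙ)K(I − Pₙ)x‖∞ ≤ C ‖x‖_{2,∞} h³`, where `Pₙ` is the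
piecewise-constant midpoint interpolation and the norm is the essential supremum norm. -/
theorem stmt8 (κ₁ κ₂ : ℝ → ℝ → ℝ)
    -- κ₁, κ₂ are twice continuously differentiable on Ω₁, Ω₂ respectively
    (hκ₁ : ContDiffOn ℝ 2 (Function.uncurry κ₁) {p : ℝ × ℝ | 0 ≤ p.2 ∧ p.2 ≤ p.1 ∧ p.1 ≤ 1})
    (hκ₂ : ContDiffOn ℝ 2 (Function.uncurry κ₂) {p : ℝ × ℝ | 0 ≤ p.1 ∧ p.1 ≤ p.2 ∧ p.2 ≤ 1})
    -- they agree on the diagonal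
    (hdiag : ∀ s ∈ Icc (0:ℝ) 1, κ₁ s s = κ₂ s s) :
    ∃ C : ℝ, ∀ n : ℕ, 1 ≤ n → ∀ x : ℝ → ℝ, ContDiffOn ℝ 2 x (Icc (0:ℝ) 1) →
      supNormIco (fun s =>
          Kop κ₁ κ₂ (fun t => x t - Pmid n x t) s
            - Pmid n (Kop κ₁ κ₂ (fun t => x t - Pmid n x t)) s)
        ≤ C * normC 2 x * (1 / (n:ℝ)) ^ 3 := by
  classical
  obtain ⟨L1, hL1n, lip1, lipG1, tay1⟩ := exists_lip_taylor convex_T1 compact_T1 ud_T1 hκ₁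
  obtain ⟨L2, hL2n, lip2, lipG2, tay2⟩ := exists_lip_taylor convex_T2 compact_T2 ud_T2 hκ₂
  set L : ℝ := max L1 L2 with hLdef
  have hLn : (0:ℝ) ≤ L := le_trans hL1n (le_max_left _ _)
  have lip1' : ∀ p ∈ {p : ℝ × ℝ | 0 ≤ p.2 ∧ p.2 ≤ p.1 ∧ p.1 ≤ 1},
      ∀ q ∈ {p : ℝ × ℝ | 0 ≤ p.2 ∧ p.2 ≤ p.1 ∧ p.1 ≤ 1},
      |Function.uncurry κ₁ q - Function.uncurry κ₁ p| ≤ L * ‖q - p‖ :=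
    fun p hp q hq => le_trans (lip1 p hp q hq)
      (mul_le_mul_of_nonneg_right (le_max_left _ _) (norm_nonneg _))
  have lipG1' : ∀ p ∈ {p : ℝ × ℝ | 0 ≤ p.2 ∧ p.2 ≤ p.1 ∧ p.1 ≤ 1},
      ∀ q ∈ {p : ℝ × ℝ | 0 ≤ p.2 ∧ p.2 ≤ p.1 ∧ p.1 ≤ 1},
      ‖fderivWithin ℝ (Function.uncurry κ₁) {p : ℝ × ℝ | 0 ≤ p.2 ∧ p.2 ≤ p.1 ∧ p.1 ≤ 1} q
        - fderivWithin ℝ (Function.uncurry κ₁) {p : ℝ × ℝ | 0 ≤ p.2 ∧ p.2 ≤ p.1 ∧ p.1 ≤ 1} p‖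
        ≤ L * ‖q - p‖ :=
    fun p hp q hq => le_trans (lipG1 p hp q hq)
      (mul_le_mul_of_nonneg_right (le_max_left _ _) (norm_nonneg _))
  have tay1' : ∀ p ∈ {p : ℝ × ℝ | 0 ≤ p.2 ∧ p.2 ≤ p.1 ∧ p.1 ≤ 1},
      ∀ q ∈ {p : ℝ × ℝ | 0 ≤ p.2 ∧ p.2 ≤ p.1 ∧ p.1 ≤ 1},
      |Function.uncurry κ₁ q - Function.uncurry κ₁ p
        - fderivWithin ℝ (Function.uncurry κ₁) {p : ℝ × ℝ | 0 ≤ p.2 ∧ p.2 ≤ p.1 ∧ p.1 ≤ 1} p (q - p)|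
        ≤ L * ‖q - p‖ ^ 2 :=
    fun p hp q hq => le_trans (tay1 p hp q hq)
      (mul_le_mul_of_nonneg_right (le_max_left _ _) (pow_nonneg (norm_nonneg _) 2))
  have lip2' : ∀ p ∈ {p : ℝ × ℝ | 0 ≤ p.1 ∧ p.1 ≤ p.2 ∧ p.2 ≤ 1},
      ∀ q ∈ {p : ℝ × ℝ | 0 ≤ p.1 ∧ p.1 ≤ p.2 ∧ p.2 ≤ 1},
      |Function.uncurry κ₂ q - Function.uncurry κ₂ p| ≤ L * ‖q - p‖ :=
    fun p hp q hq => le_trans (lip2 p hp q hq)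
      (mul_le_mul_of_nonneg_right (le_max_right _ _) (norm_nonneg _))
  have lipG2' : ∀ p ∈ {p : ℝ × ℝ | 0 ≤ p.1 ∧ p.1 ≤ p.2 ∧ p.2 ≤ 1},
      ∀ q ∈ {p : ℝ × ℝ | 0 ≤ p.1 ∧ p.1 ≤ p.2 ∧ p.2 ≤ 1},
      ‖fderivWithin ℝ (Function.uncurry κ₂) {p : ℝ × ℝ | 0 ≤ p.1 ∧ p.1 ≤ p.2 ∧ p.2 ≤ 1} q
        - fderivWithin ℝ (Function.uncurry κ₂) {p : ℝ × ℝ | 0 ≤ p.1 ∧ p.1 ≤ p.2 ∧ p.2 ≤ 1} p‖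
        ≤ L * ‖q - p‖ :=
    fun p hp q hq => le_trans (lipG2 p hp q hq)
      (mul_le_mul_of_nonneg_right (le_max_right _ _) (norm_nonneg _))
  have tay2' : ∀ p ∈ {p : ℝ × ℝ | 0 ≤ p.1 ∧ p.1 ≤ p.2 ∧ p.2 ≤ 1},
      ∀ q ∈ {p : ℝ × ℝ | 0 ≤ p.1 ∧ p.1 ≤ p.2 ∧ p.2 ≤ 1},
      |Function.uncurry κ₂ q - Function.uncurry κ₂ p
        - fderivWithin ℝ (Function.uncurry κ₂) {p : ℝ × ℝ | 0 ≤ p.1 ∧ p.1 ≤ p.2 ∧ p.2 ≤ 1} p (q - p)|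
        ≤ L * ‖q - p‖ ^ 2 :=
    fun p hp q hq => le_trans (tay2 p hp q hq)
      (mul_le_mul_of_nonneg_right (le_max_right _ _) (pow_nonneg (norm_nonneg _) 2))
  have hc1 : ContinuousOn (Function.uncurry κ₁) {p : ℝ × ℝ | 0 ≤ p.2 ∧ p.2 ≤ p.1 ∧ p.1 ≤ 1} :=
    hκ₁.continuousOn
  have hc2 : ContinuousOn (Function.uncurry κ₂) {p : ℝ × ℝ | 0 ≤ p.1 ∧ p.1 ≤ p.2 ∧ p.2 ≤ 1} :=
    hκ₂.continuousOn
  refine ⟨L + 1, ?_⟩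
  intro n hn x hx
  have npos : (0:ℝ) < n := by exact_mod_cast hn
  have hnne : (n:ℝ) ≠ 0 := npos.ne'
  set δ : ℝ := 1/(2*(n:ℝ)) with hδdef
  have hδ0 : (0:ℝ) ≤ δ := by rw [hδdef]; positivity
  have hud : UniqueDiffOn ℝ (Icc (0:ℝ) 1) := uniqueDiffOn_Icc one_pos
  set X : ℝ := normC 2 x with hXdef
  have hcont0 : ContinuousOn x (Icc (0:ℝ) 1) := hx.continuousOn
  have hiDW : ∀ i : ℕ, i ≤ 2 → ∀ t ∈ Icc (0:ℝ) 1,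
      |iteratedDerivWithin i x (Icc (0:ℝ) 1) t| ≤ X := by
    intro i hi t ht
    have hle2 : (i : WithTop ℕ∞) ≤ 2 := by exact_mod_cast hi
    have hconti := hx.continuousOn_iteratedDerivWithin hle2 hud
    obtain ⟨C, hC⟩ := isCompact_Icc.exists_bound_of_continuousOn hconti
    have hbdd : BddAbove (range fun t' : Icc (0:ℝ) 1 =>
        |iteratedDerivWithin i x (Icc (0:ℝ) 1) t'.1|) := by
      refine ⟨C, ?_⟩
      rintro y ⟨⟨t', ht'⟩, rfl⟩
      simpa [Real.norm_eq_abs] using hC t' ht'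
    have h1 : |iteratedDerivWithin i x (Icc (0:ℝ) 1) t|
        ≤ ⨆ t' : Icc (0:ℝ) 1, |iteratedDerivWithin i x (Icc (0:ℝ) 1) t'.1| :=
      le_ciSup hbdd (⟨t, ht⟩ : Icc (0:ℝ) 1)
    refine h1.trans ?_
    rw [hXdef]
    unfold normC
    exact le_ciSup (f := fun i : Fin 3 =>
      ⨆ t' : Icc (0:ℝ) 1, |iteratedDerivWithin i.1 x (Icc (0:ℝ) 1) t'.1|)
      (Set.finite_range _).bddAbove ⟨i, by omega⟩
  have hXn : (0:ℝ) ≤ X :=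
    le_trans (abs_nonneg _) (hiDW 0 (by norm_num) 0 ⟨le_refl 0, by norm_num⟩)
  set dx : ℝ → ℝ := derivWithin x (Icc (0:ℝ) 1) with hdxdef
  have hx1b : ∀ t ∈ Icc (0:ℝ) 1, |dx t| ≤ X := by
    intro t ht
    have h1 := hiDW 1 (by norm_num) t ht
    rwa [iteratedDerivWithin_one] at h1
  set ddx : ℝ → ℝ := derivWithin dx (Icc (0:ℝ) 1) with hddxdef
  have hx2b : ∀ t ∈ Icc (0:ℝ) 1, |ddx t| ≤ X := by
    intro t ht
    have h2 := hiDW 2 (by norm_num) t ht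
    rw [show (2:ℕ) = 1 + 1 from rfl, iteratedDerivWithin_succ] at h2
    have he : derivWithin (iteratedDerivWithin 1 x (Icc (0:ℝ) 1)) (Icc (0:ℝ) 1) t = ddx t := by
      rw [hddxdef]
      apply derivWithin_congr
      · intro u hu; rw [iteratedDerivWithin_one]
      · rw [iteratedDerivWithin_one]
    rwa [he] at h2
  have hdiff1 : DifferentiableOn ℝ x (Icc (0:ℝ) 1) := hx.differentiableOn (by norm_num)
  have hdx1 : ContDiffOn ℝ 1 dx (Icc (0:ℝ) 1) := hx.derivWithin hud (by norm_num)
  have hdiffdx : DifferentiableOn ℝ dx (Icc (0:ℝ) 1) := hdx1.differentiableOn (by norm_num)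
  have hxlipIcc : ∀ a ∈ Icc (0:ℝ) 1, ∀ b ∈ Icc (0:ℝ) 1, |x a - x b| ≤ X * |a - b| := by
    intro a ha b hb
    have key := Convex.norm_image_sub_le_of_norm_hasDerivWithin_le (f := x) (f' := dx) (C := X)
      (fun t ht => (hdiff1 t ht).hasDerivWithinAt)
      (fun t ht => by rw [Real.norm_eq_abs]; exact hx1b t ht)
      (convex_Icc 0 1) hb ha
    simpa [Real.norm_eq_abs] using key
  have hdxlipIcc : ∀ a ∈ Icc (0:ℝ) 1, ∀ b ∈ Icc (0:ℝ) 1, |dx a - dx b| ≤ X * |a - b| := by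
    intro a ha b hb
    have key := Convex.norm_image_sub_le_of_norm_hasDerivWithin_le (f := dx) (f' := ddx) (C := X)
      (fun t ht => (hdiffdx t ht).hasDerivWithinAt)
      (fun t ht => by rw [Real.norm_eq_abs]; exact hx2b t ht)
      (convex_Icc 0 1) hb ha
    simpa [Real.norm_eq_abs] using key
  have hxtayIcc : ∀ a ∈ Icc (0:ℝ) 1, ∀ b ∈ Icc (0:ℝ) 1,
      |x a - x b - dx b * (a - b)| ≤ X * |a - b| ^ 2 := by
    intro a ha b hb
    have hconv' : Convex ℝ (Icc (0:ℝ) 1 ∩ Metric.closedBall b |a - b|) :=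
      (convex_Icc _ _).inter (convex_closedBall _ _)
    have hder : ∀ t ∈ Icc (0:ℝ) 1 ∩ Metric.closedBall b |a - b|,
        HasDerivWithinAt (fun u => x u - dx b * u) (dx t - dx b)
          (Icc (0:ℝ) 1 ∩ Metric.closedBall b |a - b|) t := by
      intro t ht
      have h1 : HasDerivWithinAt x (dx t) (Icc (0:ℝ) 1 ∩ Metric.closedBall b |a - b|) t :=
        ((hdiff1 t ht.1).hasDerivWithinAt).mono inter_subset_left
      have h2 : HasDerivWithinAt (fun u : ℝ => dx b * u) (dx b)
          (Icc (0:ℝ) 1 ∩ Metric.closedBall b |a - b|) t := by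
        simpa using (hasDerivWithinAt_id t _).const_mul (dx b)
      exact h1.sub h2
    have hbound : ∀ t ∈ Icc (0:ℝ) 1 ∩ Metric.closedBall b |a - b|,
        ‖dx t - dx b‖ ≤ X * |a - b| := by
      intro t ht
      rw [Real.norm_eq_abs]
      refine le_trans (hdxlipIcc t ht.1 b hb) (mul_le_mul_of_nonneg_left ?_ hXn)
      have h3 := ht.2
      rwa [Metric.mem_closedBall, Real.dist_eq] at h3
    have hmb : b ∈ Icc (0:ℝ) 1 ∩ Metric.closedBall b |a - b| :=
      ⟨hb, Metric.mem_closedBall_self (abs_nonneg _)⟩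
    have hma : a ∈ Icc (0:ℝ) 1 ∩ Metric.closedBall b |a - b| :=
      ⟨ha, by rw [Metric.mem_closedBall, Real.dist_eq]⟩
    have key := Convex.norm_image_sub_le_of_norm_hasDerivWithin_le hder hbound hconv' hmb hma
    have he : x a - x b - dx b * (a - b) = (x a - dx b * a) - (x b - dx b * b) := by ring
    rw [he]
    calc |(x a - dx b * a) - (x b - dx b * b)| ≤ X * |a - b| * ‖a - b‖ := by
          simpa [Real.norm_eq_abs] using key
      _ = X * |a - b| ^ 2 := by rw [Real.norm_eq_abs]; ring
  have hcell : ∀ (σ : ℝ), σ ∈ Icc (0:ℝ) 1 → ∀ (j : ℕ), j < n →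
      IntervalIntegrable
        (fun t => (if t ≤ σ then κ₁ σ t else κ₂ σ t) * (x t - Pmid n x t))
        volume ((j:ℝ)/n) (((j:ℝ)+1)/n) := by
    intro σ hσ j hjn
    exact cell_intable hc1 hc2 hcont0
      (fun σ' hσ' c u v hu huv hv => int_piece hc1 hc2 hcont0 hσ' c hu huv hv) hn hjn hσ
  have hsplit : ∀ σ : ℝ, σ ∈ Icc (0:ℝ) 1 →
      Kop κ₁ κ₂ (fun t => x t - Pmid n x t) σ
        = ∑ k ∈ Finset.range n, ∫ t in ((k:ℝ)/n)..(((k:ℝ)+1)/n),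
            (if t ≤ σ then κ₁ σ t else κ₂ σ t) * (x t - Pmid n x t) := by
    intro σ hσ
    have main : ∀ j : ℕ, j ≤ n →
        IntervalIntegrable
          (fun t => (if t ≤ σ then κ₁ σ t else κ₂ σ t) * (x t - Pmid n x t))
          volume 0 ((j:ℝ)/n)
        ∧ (∫ t in (0:ℝ)..((j:ℝ)/n),
            (if t ≤ σ then κ₁ σ t else κ₂ σ t) * (x t - Pmid n x t))
          = ∑ k ∈ Finset.range j, ∫ t in ((k:ℝ)/n)..(((k:ℝ)+1)/n),
              (if t ≤ σ then κ₁ σ t else κ₂ σ t) * (x t - Pmid n x t) := by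
      intro j hj
      induction j with
      | zero =>
        constructor
        · simp
        · simp
      | succ j ih =>
        have hj' : j ≤ n := Nat.le_of_succ_le hj
        have hjn : j < n := Nat.lt_of_succ_le hj
        obtain ⟨ih1, ih2⟩ := ih hj'
        have hcellj := hcell σ hσ j hjn
        have hcast : ((j+1 : ℕ) : ℝ) = (j:ℝ) + 1 := by push_cast; ring
        constructor
        · rw [hcast]
          exact ih1.trans hcellj
        · rw [hcast, Finset.sum_range_succ, ← ih2]
          exact (intervalIntegral.integral_add_adjacent_intervals ih1 hcellj).symm
    have hfin := (main n le_rfl).2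
    have hend : ((n:ℕ):ℝ)/(n:ℝ) = (1:ℝ) := div_self hnne
    rw [hend] at hfin
    show (∫ t in (0:ℝ)..1, (if t ≤ σ then κ₁ σ t else κ₂ σ t) * (x t - Pmid n x t)) = _
    exact hfin
  have hne : Nonempty (Ico (0:ℝ) 1) := ⟨⟨0, by constructor <;> norm_num⟩⟩
  unfold supNormIco
  apply ciSup_le
  rintro ⟨s, hs⟩
  dsimp only
  obtain ⟨i0, hi0n, hIs, hsl, hsr⟩ := exists_cell_Ico hn hs
  have hsIcc : s ∈ Icc (0:ℝ) 1 := ⟨hs.1, le_of_lt hs.2⟩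
  have hmIcc : ((2*(i0:ℝ)+1)/(2*(n:ℝ))) ∈ Icc (0:ℝ) 1 := mid_mem hn hi0n
  have hsm : |s - ((2*(i0:ℝ)+1)/(2*(n:ℝ)))| ≤ δ := mid_dist hn hsl (le_of_lt hsr)
  have hPK : Pmid n (Kop κ₁ κ₂ (fun t => x t - Pmid n x t)) s
      = Kop κ₁ κ₂ (fun t => x t - Pmid n x t) ((2*(i0:ℝ)+1)/(2*(n:ℝ))) := Pmid_eq' _ hIs
  rw [hPK, hsplit s hsIcc, hsplit ((2*(i0:ℝ)+1)/(2*(n:ℝ))) hmIcc, ← Finset.sum_sub_distrib]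
  refine le_trans (Finset.abs_sum_le_sum_abs _ _) ?_
  have per_k : ∀ k ∈ Finset.range n,
      |(∫ t in ((k:ℝ)/(n:ℝ))..(((k:ℝ)+1)/(n:ℝ)), (if t ≤ s then κ₁ s t else κ₂ s t) * (x t - Pmid n x t))
        - ∫ t in ((k:ℝ)/(n:ℝ))..(((k:ℝ)+1)/(n:ℝ)), (if t ≤ ((2*(i0:ℝ)+1)/(2*(n:ℝ))) then κ₁ ((2*(i0:ℝ)+1)/(2*(n:ℝ))) t else κ₂ ((2*(i0:ℝ)+1)/(2*(n:ℝ))) t) * (x t - Pmid n x t)|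
      ≤ (3*L*δ^2*(X*δ)*(1/(n:ℝ)) + L*δ*(X*δ^2*(1/(n:ℝ)))) + (if k = i0 then (L*δ*(X*δ)*(1/(n:ℝ))) else 0) := by
    intro k hk
    have hkn : k < n := Finset.mem_range.mp hk
    have hu0 : (0:ℝ) ≤ ((k:ℝ)/(n:ℝ)) := by positivity
    have huv : ((k:ℝ)/(n:ℝ)) ≤ (((k:ℝ)+1)/(n:ℝ)) := by
      rw [div_le_div_iff_of_pos_right npos]; linarith
    have hv1 : (((k:ℝ)+1)/(n:ℝ)) ≤ 1 := by
      rw [div_le_one npos]; exact_mod_cast hkn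
    have hIccsub : Icc ((k:ℝ)/(n:ℝ)) (((k:ℝ)+1)/(n:ℝ)) ⊆ Icc (0:ℝ) 1 :=
      fun t ht => ⟨le_trans hu0 ht.1, le_trans ht.2 hv1⟩
    have hμmem : ((2*(k:ℝ)+1)/(2*(n:ℝ))) ∈ Icc ((k:ℝ)/(n:ℝ)) (((k:ℝ)+1)/(n:ℝ)) := ⟨mid_lb hn, le_of_lt (mid_ub hn)⟩
    have hμIcc : ((2*(k:ℝ)+1)/(2*(n:ℝ))) ∈ Icc (0:ℝ) 1 := mid_mem hn hkn
    have hμd : ∀ t ∈ Icc ((k:ℝ)/(n:ℝ)) (((k:ℝ)+1)/(n:ℝ)), |t - ((2*(k:ℝ)+1)/(2*(n:ℝ)))| ≤ δ :=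
      fun t ht => mid_dist hn ht.1 ht.2
    have hvu : (((k:ℝ)+1)/(n:ℝ)) - ((k:ℝ)/(n:ℝ)) = 1/(n:ℝ) := by
      rw [div_sub_div_same]; congr 1; ring
    have hxlip' : ∀ t ∈ Icc ((k:ℝ)/(n:ℝ)) (((k:ℝ)+1)/(n:ℝ)), |x t - x ((2*(k:ℝ)+1)/(2*(n:ℝ)))| ≤ X * δ :=
      fun t ht => le_trans (hxlipIcc t (hIccsub ht) _ hμIcc)
        (mul_le_mul_of_nonneg_left (hμd t ht) hXn)
    have hxtay' : ∀ t ∈ Icc ((k:ℝ)/(n:ℝ)) (((k:ℝ)+1)/(n:ℝ)),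
        |x t - x ((2*(k:ℝ)+1)/(2*(n:ℝ))) - dx ((2*(k:ℝ)+1)/(2*(n:ℝ))) * (t - ((2*(k:ℝ)+1)/(2*(n:ℝ))))| ≤ X * δ ^ 2 :=
      fun t ht => le_trans (hxtayIcc t (hIccsub ht) _ hμIcc)
        (mul_le_mul_of_nonneg_left (pow_le_pow_left₀ (abs_nonneg _) (hμd t ht) 2) hXn)
    have hzero : (∫ t in ((k:ℝ)/(n:ℝ))..(((k:ℝ)+1)/(n:ℝ)), (t - ((2*(k:ℝ)+1)/(2*(n:ℝ))))) = 0 := by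
      rw [intervalIntegral.integral_sub
        (Continuous.intervalIntegrable (continuous_id' : Continuous fun t : ℝ => t) _ _)
        (Continuous.intervalIntegrable continuous_const _ _),
        integral_id, intervalIntegral.integral_const, smul_eq_mul]
      field_simp
      ring
    have hgood0 : (0:ℝ) ≤ (3*L*δ^2*(X*δ)*(1/(n:ℝ)) + L*δ*(X*δ^2*(1/(n:ℝ)))) := by
      have e1 : (0:ℝ) ≤ X*δ := mul_nonneg hXn hδ0
      have e2 : (0:ℝ) ≤ δ^2 := sq_nonneg δ
      have e3 : (0:ℝ) ≤ (1:ℝ)/(n:ℝ) := by positivity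
      exact add_nonneg
        (mul_nonneg (mul_nonneg (mul_nonneg (mul_nonneg (by norm_num) hLn) e2) e1) e3)
        (mul_nonneg (mul_nonneg hLn hδ0) (mul_nonneg (mul_nonneg hXn e2) e3))
    have hdk : (∫ t in ((k:ℝ)/(n:ℝ))..(((k:ℝ)+1)/(n:ℝ)), (if t ≤ s then κ₁ s t else κ₂ s t) * (x t - Pmid n x t))
          - (∫ t in ((k:ℝ)/(n:ℝ))..(((k:ℝ)+1)/(n:ℝ)), (if t ≤ ((2*(i0:ℝ)+1)/(2*(n:ℝ))) then κ₁ ((2*(i0:ℝ)+1)/(2*(n:ℝ))) t else κ₂ ((2*(i0:ℝ)+1)/(2*(n:ℝ))) t) * (x t - Pmid n x t))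
        = ∫ t in ((k:ℝ)/(n:ℝ))..(((k:ℝ)+1)/(n:ℝ)), ((if t ≤ s then κ₁ s t else κ₂ s t) - (if t ≤ ((2*(i0:ℝ)+1)/(2*(n:ℝ))) then κ₁ ((2*(i0:ℝ)+1)/(2*(n:ℝ))) t else κ₂ ((2*(i0:ℝ)+1)/(2*(n:ℝ))) t)) * (x t - x ((2*(k:ℝ)+1)/(2*(n:ℝ)))) := by
      rw [← intervalIntegral.integral_sub (hcell s hsIcc k hkn) (hcell ((2*(i0:ℝ)+1)/(2*(n:ℝ))) hmIcc k hkn)]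
      apply intervalIntegral.integral_congr_ae
      have h0 : (volume : Measure ℝ) {(((k:ℝ)+1)/(n:ℝ))} = 0 := Real.volume_singleton
      have hvne : ∀ᵐ (t:ℝ) ∂(volume : Measure ℝ), t ≠ (((k:ℝ)+1)/(n:ℝ)) := by
        refine (measure_eq_zero_iff_ae_notMem.mp h0).mono ?_
        intro a ha
        simpa using ha
      filter_upwards [hvne] with t htne htI
      rw [uIoc_of_le huv] at htI
      have hIt : interpIdx n t = k + 1 :=
        interpIdx_eq hn hkn (le_of_lt htI.1) (lt_of_le_of_ne htI.2 htne)
      rw [Pmid_eq' x hIt]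
      ring
    rw [hdk]
    by_cases hki : k = i0
    · have hbad : |∫ t in ((k:ℝ)/(n:ℝ))..(((k:ℝ)+1)/(n:ℝ)), ((if t ≤ s then κ₁ s t else κ₂ s t) - (if t ≤ ((2*(i0:ℝ)+1)/(2*(n:ℝ))) then κ₁ ((2*(i0:ℝ)+1)/(2*(n:ℝ))) t else κ₂ ((2*(i0:ℝ)+1)/(2*(n:ℝ))) t)) * (x t - x ((2*(k:ℝ)+1)/(2*(n:ℝ))))|
          ≤ L*δ*(X*δ)*(1/(n:ℝ)) := by
        have hb := intervalIntegral.norm_integral_le_of_norm_le_const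
          (C := L*δ*(X*δ)) (a := ((k:ℝ)/(n:ℝ))) (b := (((k:ℝ)+1)/(n:ℝ)))
          (f := fun t => ((if t ≤ s then κ₁ s t else κ₂ s t) - (if t ≤ ((2*(i0:ℝ)+1)/(2*(n:ℝ))) then κ₁ ((2*(i0:ℝ)+1)/(2*(n:ℝ))) t else κ₂ ((2*(i0:ℝ)+1)/(2*(n:ℝ))) t)) * (x t - x ((2*(k:ℝ)+1)/(2*(n:ℝ))))) ?_
        · rw [Real.norm_eq_abs, hvu, abs_of_nonneg (by positivity : (0:ℝ) ≤ 1/(n:ℝ))] at hb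
          exact hb
        · intro t ht
          rw [uIoc_of_le huv] at ht
          have ht' : t ∈ Icc ((k:ℝ)/(n:ℝ)) (((k:ℝ)+1)/(n:ℝ)) := ⟨le_of_lt ht.1, ht.2⟩
          have htIcc01 : t ∈ Icc (0:ℝ) 1 := hIccsub ht'
          rw [Real.norm_eq_abs, abs_mul]
          refine mul_le_mul ?_ (hxlip' t ht') (abs_nonneg _) (mul_nonneg hLn hδ0)
          refine le_trans (Dbound hLn lip1' lip2' hdiag hsIcc hmIcc htIcc01) ?_
          exact mul_le_mul_of_nonneg_left hsm hLn
      rw [if_pos hki]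
      refine le_trans hbad ?_
      linarith
    · rcases Nat.lt_or_ge k i0 with hklt | hge
      · -- k < i0 : κ₁ branch
        have hki1 : ((k:ℝ)+1)/(n:ℝ) ≤ (i0:ℝ)/(n:ℝ) := by
          rw [div_le_div_iff_of_pos_right npos]
          have : (k+1:ℕ) ≤ i0 := hklt
          exact_mod_cast this
        have hbr : ∀ t ∈ Icc ((k:ℝ)/(n:ℝ)) (((k:ℝ)+1)/(n:ℝ)), t ≤ s ∧ t ≤ ((2*(i0:ℝ)+1)/(2*(n:ℝ))) := by
          intro t ht
          exact ⟨le_trans ht.2 (le_trans hki1 hsl),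
            le_trans ht.2 (le_trans hki1 (mid_lb hn))⟩
        have hcongr : (∫ t in ((k:ℝ)/(n:ℝ))..(((k:ℝ)+1)/(n:ℝ)), ((if t ≤ s then κ₁ s t else κ₂ s t) - (if t ≤ ((2*(i0:ℝ)+1)/(2*(n:ℝ))) then κ₁ ((2*(i0:ℝ)+1)/(2*(n:ℝ))) t else κ₂ ((2*(i0:ℝ)+1)/(2*(n:ℝ))) t)) * (x t - x ((2*(k:ℝ)+1)/(2*(n:ℝ)))))
            = ∫ t in ((k:ℝ)/(n:ℝ))..(((k:ℝ)+1)/(n:ℝ)), (κ₁ s t - κ₁ ((2*(i0:ℝ)+1)/(2*(n:ℝ))) t) * (x t - x ((2*(k:ℝ)+1)/(2*(n:ℝ)))) := by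
          apply intervalIntegral.integral_congr
          intro t ht
          rw [uIcc_of_le huv] at ht
          obtain ⟨hb1, hb2⟩ := hbr t ht
          simp only [if_pos hb1, if_pos hb2]
        rw [hcongr]
        have hmem : ∀ t ∈ Icc ((k:ℝ)/(n:ℝ)) (((k:ℝ)+1)/(n:ℝ)),
            ((s, t) ∈ {p : ℝ × ℝ | 0 ≤ p.2 ∧ p.2 ≤ p.1 ∧ p.1 ≤ 1})
              ∧ ((((2*(i0:ℝ)+1)/(2*(n:ℝ))), t) ∈ {p : ℝ × ℝ | 0 ≤ p.2 ∧ p.2 ≤ p.1 ∧ p.1 ≤ 1}) :=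
          fun t ht => ⟨⟨(hIccsub ht).1, (hbr t ht).1, hsIcc.2⟩,
            ⟨(hIccsub ht).1, (hbr t ht).2, hmIcc.2⟩⟩
        have hgc := good_cell hLn lip1' lipG1' tay1' hc1 hXn hδ0 hsm huv hμmem hμd hmem
          hxlip' hxtay' hzero (hcont0.mono hIccsub)
        rw [hvu] at hgc
        refine le_trans hgc ?_
        rw [if_neg hki, add_zero]
      · -- i0 < k : κ₂ branch
        have hgt : i0 < k := lt_of_le_of_ne hge (fun h => hki h.symm)
        have hki1 : ((i0:ℝ)+1)/(n:ℝ) ≤ (k:ℝ)/(n:ℝ) := by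
          rw [div_le_div_iff_of_pos_right npos]
          have : (i0+1:ℕ) ≤ k := hgt
          exact_mod_cast this
        have hbr : ∀ t ∈ Icc ((k:ℝ)/(n:ℝ)) (((k:ℝ)+1)/(n:ℝ)), s < t ∧ ((2*(i0:ℝ)+1)/(2*(n:ℝ))) < t := by
          intro t ht
          exact ⟨lt_of_lt_of_le (lt_of_lt_of_le hsr hki1) ht.1,
            lt_of_lt_of_le (lt_of_lt_of_le (mid_ub hn) hki1) ht.1⟩
        have hcongr : (∫ t in ((k:ℝ)/(n:ℝ))..(((k:ℝ)+1)/(n:ℝ)), ((if t ≤ s then κ₁ s t else κ₂ s t) - (if t ≤ ((2*(i0:ℝ)+1)/(2*(n:ℝ))) then κ₁ ((2*(i0:ℝ)+1)/(2*(n:ℝ))) t else κ₂ ((2*(i0:ℝ)+1)/(2*(n:ℝ))) t)) * (x t - x ((2*(k:ℝ)+1)/(2*(n:ℝ)))))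
            = ∫ t in ((k:ℝ)/(n:ℝ))..(((k:ℝ)+1)/(n:ℝ)), (κ₂ s t - κ₂ ((2*(i0:ℝ)+1)/(2*(n:ℝ))) t) * (x t - x ((2*(k:ℝ)+1)/(2*(n:ℝ)))) := by
          apply intervalIntegral.integral_congr
          intro t ht
          rw [uIcc_of_le huv] at ht
          obtain ⟨hb1, hb2⟩ := hbr t ht
          simp only [if_neg (not_le.mpr hb1), if_neg (not_le.mpr hb2)]
        rw [hcongr]
        have hmem : ∀ t ∈ Icc ((k:ℝ)/(n:ℝ)) (((k:ℝ)+1)/(n:ℝ)),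
            ((s, t) ∈ {p : ℝ × ℝ | 0 ≤ p.1 ∧ p.1 ≤ p.2 ∧ p.2 ≤ 1})
              ∧ ((((2*(i0:ℝ)+1)/(2*(n:ℝ))), t) ∈ {p : ℝ × ℝ | 0 ≤ p.1 ∧ p.1 ≤ p.2 ∧ p.2 ≤ 1}) :=
          fun t ht => ⟨⟨hsIcc.1, le_of_lt (hbr t ht).1, (hIccsub ht).2⟩,
            ⟨hmIcc.1, le_of_lt (hbr t ht).2, (hIccsub ht).2⟩⟩
        have hgc := good_cell hLn lip2' lipG2' tay2' hc2 hXn hδ0 hsm huv hμmem hμd hmem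
          hxlip' hxtay' hzero (hcont0.mono hIccsub)
        rw [hvu] at hgc
        refine le_trans hgc ?_
        rw [if_neg hki, add_zero]
  refine le_trans (Finset.sum_le_sum per_k) ?_
  rw [Finset.sum_add_distrib, Finset.sum_const, Finset.card_range,
    Finset.sum_ite_eq' (Finset.range n) i0 (fun _ => (L*δ*(X*δ)*(1/(n:ℝ)))),
    if_pos (Finset.mem_range.mpr hi0n), nsmul_eq_mul]
  have heq : (n:ℝ) * (3*L*δ^2*(X*δ)*(1/(n:ℝ)) + L*δ*(X*δ^2*(1/(n:ℝ)))) + (L*δ*(X*δ)*(1/(n:ℝ))) = (3/4)*L*X*(1/(n:ℝ))^3 := by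
    rw [hδdef]
    field_simp
    ring
  rw [heq]
  have hh3 : (0:ℝ) ≤ (1/(n:ℝ))^3 := by positivity
  nlinarith [mul_nonneg hXn hh3, mul_nonneg hLn (mul_nonneg hXn hh3)]
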